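/- (Corollary, first part) Let Γ be the subgroup of GL(4, ℤ) generated by A and T. For every X ∈ Γ there exist integers m and n such that the characteristic polynomial of X equals x^4 + (5*m+1)*x^3 + (5*n+1)*x^2 + (5*m+1)*x + 1. -/

import Mathlib

open Matrix Polynomial

/-- The local monodromy of the quintic-mirror family around `λ = 0`. -/
def A : Matrix (Fin 4) (Fin 4) ℤ :=
  !![11, 8, -5, 0; 5, -4, -3, 1; 20, 15, -9, 0; 5, -5, -3, 1]

/-- The local monodromy of the quintic-mirror family around `λ = 1`. -/
def T : Matrix (Fin 4) (Fin 4) ℤ :=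
  !![1, 0, 0, 0; 0, 1, 0, -1; 0, 0, 1, 0; 0, 0, 0, 1]

/-- `A` as an element of `GL(4, ℤ)`. -/
def AGL : GL (Fin 4) ℤ :=
  ⟨A, !![-9, -3, 5, 3; 0, 1, 0, -1; -20, -5, 11, 5; -15, 5, 8, -4],
    by decide, by decide⟩

/-- `T` as an element of `GL(4, ℤ)`. -/
def TGL : GL (Fin 4) ℤ :=
  ⟨T, !![1, 0, 0, 0; 0, 1, 0, 1; 0, 0, 1, 0; 0, 0, 0, 1],
    by decide, by decide⟩

/-!
Both generators, hence all of `Γ`, preserve the symplectic form `symplecticForm`, have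
determinant `1`, and modulo 5 fix the flag `⟨e₀⟩ ⊂ ⟨e₀, e₁⟩ ⊂ ⟨e₀, e₁, e₃⟩`, acting
trivially on its graded pieces. A symplectic matrix is conjugate to its inverse transpose, so
with determinant `1` its characteristic polynomial `p` is palindromic. Being unitriangular
mod 5, it has `p ≡ (X - 1)⁴ = X⁴ + X³ + X² + X + 1 (mod 5)`. A monic palindromic quartic with
these residues has the stated shape.
-/

namespace Matrix

variable {n R : Type*} [Fintype n] [CommRing R]

theorem BlockTriangular.mul_apply_self {α : Type*} [LinearOrder α] {b : n → α}
    (hb : Function.Injective b) {M N : Matrix n n R} (hM : M.BlockTriangular b)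
    (hN : N.BlockTriangular b) (i : n) : (M * N) i i = M i i * N i i := by
  rw [mul_apply]
  refine Finset.sum_eq_single_of_mem i (Finset.mem_univ i) fun k _ hki => ?_
  rcases lt_or_gt_of_ne (hb.ne hki) with hlt | hgt
  · rw [hM hlt, zero_mul]
  · rw [hN hgt, mul_zero]

variable [DecidableEq n]

def isometryGroup (J : Matrix n n R) : Subgroup (GL n R) where
  carrier := {g | (g : Matrix n n R)ᵀ * J * g = J}
  one_mem' := by simp
  mul_mem' {g h} (hg : _ = J) (hh : _ = J) := show _ = J from
    calc (↑(g * h) : Matrix n n R)ᵀ * J * ↑(g * h)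
        = (↑h)ᵀ * ((↑g)ᵀ * J * ↑g) * ↑h := by
          simp only [Units.val_mul, transpose_mul, Matrix.mul_assoc]
      _ = J := by rw [hg, hh]
  inv_mem' {g} (hg : _ = J) := show _ = J from
    calc (↑g⁻¹ : Matrix n n R)ᵀ * J * ↑g⁻¹
        = (↑g⁻¹ : Matrix n n R)ᵀ * ((g : Matrix n n R)ᵀ * J * g) * ↑g⁻¹ := by rw [hg]
      _ = (↑(g * g⁻¹) : Matrix n n R)ᵀ * J * ↑(g * g⁻¹) := by
        simp only [Units.val_mul, transpose_mul, Matrix.mul_assoc]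
      _ = J := by simp

@[simp]
theorem mem_isometryGroup {J : Matrix n n R} {g : GL n R} :
    g ∈ isometryGroup J ↔ (g : Matrix n n R)ᵀ * J * g = J :=
  Iff.rfl

theorem charpoly_inv_of_transpose_mul_mul_eq {J M : Matrix n n R} (hJ : IsUnit J)
    (hM : Mᵀ * J * M = J) : M⁻¹.charpoly = M.charpoly := by
  have hinv : M⁻¹ = hJ.unit.val⁻¹ * Mᵀ * hJ.unit.val := by
    refine inv_eq_left_inv ?_
    calc hJ.unit.val⁻¹ * Mᵀ * hJ.unit.val * M = hJ.unit.val⁻¹ * (Mᵀ * J * M) := by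
          simp only [IsUnit.unit_spec, Matrix.mul_assoc]
      _ = 1 := by
          rw [hM, IsUnit.unit_spec, nonsing_inv_mul _ ((isUnit_iff_isUnit_det J).1 hJ)]
  rw [hinv, charpoly_units_conj', charpoly_transpose]

theorem reverse_charpoly_of_transpose_mul_mul_eq {J M : Matrix n n R} (hJ : IsUnit J)
    (hM : Mᵀ * J * M = J) (hdet : M.det = 1) (hn : Even (Fintype.card n)) :
    M.charpoly.reverse = M.charpoly := by
  have hMunit : IsUnit M := (isUnit_iff_isUnit_det M).2 (hdet ▸ isUnit_one)
  have := charpoly_inv M hMunit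
  rw [charpoly_inv_of_transpose_mul_mul_eq hJ hM, hdet, hn.neg_one_pow] at this
  simpa [reverse_charpoly] using this.symm

variable [LinearOrder n]

theorem charpoly_eq_X_sub_one_pow_of_blockTriangular (σ : Equiv.Perm n) {M : Matrix n n R}
    (hM : M.BlockTriangular σ) (hdiag : ∀ i, M i i = 1) :
    M.charpoly = (X - 1) ^ Fintype.card n := by
  rw [← charpoly_reindex σ, charpoly_of_isUpperTriangular _ (blockTriangular_reindex_iff.2 hM)]
  simp [hdiag]

def unitriangularGroup (σ : Equiv.Perm n) : Subgroup (GL n R) where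
  carrier := {g | (g : Matrix n n R).BlockTriangular σ ∧ ∀ i, (g : Matrix n n R) i i = 1}
  one_mem' := ⟨blockTriangular_one, one_apply_eq⟩
  mul_mem' {g h} hg hh :=
    ⟨hg.1.mul hh.1, fun i => by
      rw [Units.val_mul, hg.1.mul_apply_self σ.injective hh.1, hg.2, hh.2, one_mul]⟩
  inv_mem' {g} hg := by
    have hinv : (g : Matrix n n R)⁻¹ = ↑g⁻¹ := (coe_units_inv g).symm
    have htri : (↑g⁻¹ : Matrix n n R).BlockTriangular σ :=
      hinv ▸ blockTriangular_inv_of_blockTriangular hg.1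
    refine ⟨htri, fun i => ?_⟩
    have := htri.mul_apply_self σ.injective hg.1 i
    rwa [← Units.val_mul, inv_mul_cancel, Units.val_one, one_apply_eq, hg.2, mul_one,
      eq_comm] at this

@[simp]
theorem mem_unitriangularGroup {σ : Equiv.Perm n} {g : GL n R} :
    g ∈ unitriangularGroup σ ↔
      (g : Matrix n n R).BlockTriangular σ ∧ ∀ i, (g : Matrix n n R) i i = 1 :=
  Iff.rfl

end Matrix

theorem X_sub_one_pow_four_eq_zmod_five :
    ((X - 1) ^ 4 : (ZMod 5)[X]) = X ^ 4 + X ^ 3 + X ^ 2 + X + 1 := by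
  have h5 : (5 : (ZMod 5)[X]) = 0 := by exact_mod_cast CharP.cast_eq_zero (ZMod 5)[X] 5
  linear_combination (X ^ 2 - X ^ 3 - X) * h5

theorem Int.exists_eq_mul_add_one_of_cast_eq_one {n : ℕ} {a : ℤ} (h : (a : ZMod n) = 1) :
    ∃ m, a = n * m + 1 := by
  obtain ⟨m, hm⟩ := (ZMod.intCast_eq_intCast_iff_dvd_sub 1 a n).1 (by simpa using h.symm)
  exact ⟨m, by rw [← hm]; ring⟩

theorem exists_eq_of_reverse_eq_of_map_eq_X_sub_one_pow {p : ℤ[X]} (hmonic : p.Monic)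
    (hdeg : p.natDegree = 4) (hrev : p.reverse = p)
    (hmod : p.map (Int.castRingHom (ZMod 5)) = (X - 1) ^ 4) :
    ∃ m n : ℤ, p = X ^ 4 + C (5 * m + 1) * X ^ 3 + C (5 * n + 1) * X ^ 2 +
      C (5 * m + 1) * X + 1 := by
  have hsymm : ∀ k ≤ 4, p.coeff (4 - k) = p.coeff k := fun k hk => by
    rw [← congrArg (coeff · k) hrev, coeff_reverse, hdeg, revAt_le hk]
  have hmod_coeff (k : ℕ) :
      (p.coeff k : ZMod 5) = (X ^ 4 + X ^ 3 + X ^ 2 + X + 1 : (ZMod 5)[X]).coeff k := by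
    rw [← X_sub_one_pow_four_eq_zmod_five, ← hmod, coeff_map, eq_intCast]
  obtain ⟨m, hm : p.coeff 3 = 5 * m + 1⟩ :=
    Int.exists_eq_mul_add_one_of_cast_eq_one (by simpa [coeff_X, coeff_one] using hmod_coeff 3)
  obtain ⟨n, hn : p.coeff 2 = 5 * n + 1⟩ :=
    Int.exists_eq_mul_add_one_of_cast_eq_one (by simpa [coeff_X, coeff_one] using hmod_coeff 2)
  have h4 : p.coeff 4 = 1 := hdeg ▸ hmonic.coeff_natDegree
  have h0 : p.coeff 0 = 1 := h4 ▸ hsymm 4 le_rfl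
  have h1 : p.coeff 1 = 5 * m + 1 := (hsymm 1 (by norm_num)).symm.trans hm
  refine ⟨m, n, ?_⟩
  rw [p.as_sum_range' 5 (by omega)]
  simp only [Finset.sum_range_succ, Finset.sum_range_zero, h0, h1, hn, hm, h4,
    ← C_mul_X_pow_eq_monomial, C_1]
  ring

def symplecticForm : Matrix (Fin 4) (Fin 4) ℤ :=
  !![0, 0, 1, 0; 0, 0, 0, 1; -1, 0, 0, 0; 0, -1, 0, 0]

theorem isUnit_symplecticForm : IsUnit symplecticForm :=
  (isUnit_iff_isUnit_det _).2 <| isUnit_det_of_left_inverse (B := -symplecticForm) (by decide)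

def monodromyInvariantGroup : Subgroup (GL (Fin 4) ℤ) :=
  isometryGroup symplecticForm ⊓ GeneralLinearGroup.det.ker ⊓
    (unitriangularGroup (Equiv.swap 2 3)).comap (GeneralLinearGroup.map (Int.castRingHom (ZMod 5)))

theorem closure_le_monodromyInvariantGroup :
    Subgroup.closure {AGL, TGL} ≤ monodromyInvariantGroup := by
  rw [Subgroup.closure_le, Set.insert_subset_iff, Set.singleton_subset_iff]
  simp only [monodromyInvariantGroup, SetLike.mem_coe, Subgroup.mem_inf, mem_isometryGroup,
    MonoidHom.mem_ker, Units.ext_iff, GeneralLinearGroup.val_det_apply, Subgroup.mem_comap,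
    mem_unitriangularGroup]
  decide

theorem charpoly_of_monodromy (X : GL (Fin 4) ℤ)
    (hX : X ∈ Subgroup.closure {AGL, TGL}) :
    ∃ m n : ℤ,
      (X : Matrix (Fin 4) (Fin 4) ℤ).charpoly =
        Polynomial.X ^ 4 + C (5 * m + 1) * Polynomial.X ^ 3 + C (5 * n + 1) * Polynomial.X ^ 2 +
          C (5 * m + 1) * Polynomial.X + 1 := by
  obtain ⟨⟨hsymp, hdet⟩, htri, hdiag⟩ := closure_le_monodromyInvariantGroup hX
  refine exists_eq_of_reverse_eq_of_map_eq_X_sub_one_pow (charpoly_monic _)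
    (charpoly_natDegree_eq_dim _) ?_ ?_
  · exact reverse_charpoly_of_transpose_mul_mul_eq isUnit_symplecticForm hsymp
      (by simpa [Units.ext_iff] using hdet) (by decide)
  · rw [← charpoly_map]
    exact charpoly_eq_X_sub_one_pow_of_blockTriangular _ htri hdiag
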